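/- (Quadratic games: joint convexity of the regularized NI function.) Let θ_i(x) = (1/2)x_iᵀ A_{ii} x_i + Σ_{l≠i} x_lᵀ A_{li} x_i for i = 1,…,N, with A_{ii} symmetric, and let C be the block matrix with diagonal blocks (1/2)A_{ii} and off-diagonal blocks A_{li}. Suppose C + Cᵀ is positive definite with smallest eigenvalue δ > 0, and let 0 < a ≤ δ. Then the regularized Nikaido–Isoda function ψ_a(x,y) = Σ_i[θ_i(x_{-i},x_i) − θ_i(x_{-i},y_i) − (a/2)‖x_i − y_i‖²] is convex in x for each fixed y ∈ ℝⁿ. -/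

import Mathlib

/-!
For a convex combination `w = t x + s z` with `t + s = 1`, a bilinear expression `B(x, x)` has
gap `t B(x, x) + s B(z, z) - B(w, w) = t s B(x - z, x - z)`, and affine terms have gap `0`.
Since `Σ_i θ_i(x) = xᵀ C x`, the gap of `ψ_a(·, y)` is `t s ((x - z)ᵀ C (x - z) - (a/2)‖x - z‖²)`,
which is nonnegative because `2 vᵀ C v ≥ δ‖v‖² ≥ a‖v‖²`.
-/

/-- Polar of a set in a real inner product space. -/
def polarSet {E : Type*} [NormedAddCommGroup E] [InnerProductSpace ℝ E] (S : Set E) : Set E :=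
  {v | ∀ z ∈ S, (inner ℝ v z : ℝ) ≤ 0}

/-- Normal cone to a set `X` at a point `x`. -/
def normalCone {E : Type*} [NormedAddCommGroup E] [InnerProductSpace ℝ E]
    (X : Set E) (x : E) : Set E :=
  {v | ∀ z ∈ X, (inner ℝ v (z - x) : ℝ) ≤ 0}

/-- Tangent cone: polar of the normal cone. -/
def tangentConeSet {E : Type*} [NormedAddCommGroup E] [InnerProductSpace ℝ E]
    (X : Set E) (x : E) : Set E :=
  polarSet (normalCone X x)

/-- The regularized Nikaido–Isoda function of a GNEP with loss functions `θ i`: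
`ψ_a(x,y) = Σ_i [θ_i(x) − θ_i(x_{-i},y_i) − (a/2)‖x_i − y_i‖²]`. -/
noncomputable def psiReg {N : ℕ} {d : Fin N → ℕ}
    (θ : Fin N → (PiLp 2 fun i => EuclideanSpace ℝ (Fin (d i))) → ℝ) (a : ℝ)
    (x y : PiLp 2 fun i => EuclideanSpace ℝ (Fin (d i))) : ℝ :=
  ∑ i, (θ i x - θ i (WithLp.toLp 2 (Function.update x i (y i))) - a / 2 * ‖x i - y i‖ ^ 2)

/-- The VI operator `F(x) = (∇_{x_i} θ_i(x))_i` of a jointly convex GNEP. -/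
noncomputable def gnepF {N : ℕ} {d : Fin N → ℕ}
    (θ : Fin N → (PiLp 2 fun i => EuclideanSpace ℝ (Fin (d i))) → ℝ)
    (x : PiLp 2 fun i => EuclideanSpace ℝ (Fin (d i))) :
    PiLp 2 fun i => EuclideanSpace ℝ (Fin (d i)) :=
  WithLp.toLp 2 fun i => gradient (fun zi => θ i (WithLp.toLp 2 (Function.update x i zi))) (x i)

open Matrix in
/-- `q(x) = xᵀ C x` where `C` is the block matrix with diagonal blocks `(1/2)A_{ii}`
and off-diagonal blocks `A_{li}`. -/
noncomputable def blockQuadForm {N : ℕ} {d : Fin N → ℕ}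
    (A : ∀ l i : Fin N, Matrix (Fin (d l)) (Fin (d i)) ℝ)
    (x : PiLp 2 fun i => EuclideanSpace ℝ (Fin (d i))) : ℝ :=
  ∑ i, ((1 / 2) * (x i ⬝ᵥ (A i i).mulVec (x i)) +
    ∑ l ∈ Finset.univ.erase i, (x l ⬝ᵥ (A l i).mulVec (x i)))

open Matrix Finset

theorem LinearMap.convexCombination_gap {R M N : Type*} [CommRing R] [AddCommGroup M] [Module R M]
    [AddCommGroup N] [Module R N] (B : M →ₗ[R] N →ₗ[R] R) (u u' : M) (v v' : N) {t s : R}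
    (hts : t + s = 1) :
    t * B u v + s * B u' v' - B (t • u + s • u') (t • v + s • v') =
      t * s * B (u - u') (v - v') := by
  obtain rfl : s = 1 - t := eq_sub_of_add_eq' hts
  simp only [map_add, map_smul, map_sub, LinearMap.add_apply, LinearMap.smul_apply,
    LinearMap.sub_apply, smul_eq_mul]
  ring

theorem norm_sub_sq_convexCombination_gap {F : Type*} [NormedAddCommGroup F]
    [InnerProductSpace ℝ F] (x z y : F) {t s : ℝ} (hts : t + s = 1) :
    t * ‖x - y‖ ^ 2 + s * ‖z - y‖ ^ 2 - ‖t • x + s • z - y‖ ^ 2 = t * s * ‖x - z‖ ^ 2 := by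
  have hw : t • x + s • z - y = t • (x - y) + s • (z - y) := by
    rw [smul_sub, smul_sub, sub_add_sub_comm, ← add_smul, hts, one_smul]
  have := (innerₗ F).convexCombination_gap (x - y) (z - y) (x - y) (z - y) hts
  simpa only [innerₗ_apply_apply, real_inner_self_eq_norm_sq, ← hw, sub_sub_sub_cancel_right]
    using this

theorem convexOn_univ_of_gap_eq {F : Type*} [AddCommGroup F] [Module ℝ F] {f Q : F → ℝ}
    (hQ : ∀ v, 0 ≤ Q v)
    (hgap : ∀ x z (t s : ℝ), t + s = 1 →
      t * f x + s * f z - f (t • x + s • z) = t * s * Q (x - z)) :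
    ConvexOn ℝ Set.univ f := by
  refine ⟨convex_univ, fun x _ z _ t s ht hs hts => ?_⟩
  have hxz := hgap x z t s hts
  have hnonneg := mul_nonneg (mul_nonneg ht hs) (hQ (x - z))
  simp only [smul_eq_mul]
  linarith

section QuadraticGame

variable {N : ℕ} {d : Fin N → ℕ}

abbrev GameSpace (d : Fin N → ℕ) : Type := PiLp 2 fun i => EuclideanSpace ℝ (Fin (d i))

def IsQuadraticLoss (A : ∀ l i : Fin N, Matrix (Fin (d l)) (Fin (d i)) ℝ)
    (θ : Fin N → GameSpace d → ℝ) : Prop :=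
  ∀ i x, θ i x = (1 / 2) * (x i ⬝ᵥ (A i i).mulVec (x i)) +
    ∑ l ∈ univ.erase i, (x l ⬝ᵥ (A l i).mulVec (x i))

noncomputable def psiRegTerm (θ : Fin N → GameSpace d → ℝ) (a : ℝ) (y : GameSpace d) (i : Fin N)
    (x : GameSpace d) : ℝ :=
  θ i x - θ i (WithLp.toLp 2 (Function.update x i (y i))) - a / 2 * ‖x i - y i‖ ^ 2

namespace IsQuadraticLoss

variable {A : ∀ l i : Fin N, Matrix (Fin (d l)) (Fin (d i)) ℝ} {θ : Fin N → GameSpace d → ℝ}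

theorem apply_update (hθ : IsQuadraticLoss A θ) (x : GameSpace d) (i : Fin N)
    (v : EuclideanSpace ℝ (Fin (d i))) :
    θ i (WithLp.toLp 2 (Function.update x i v)) =
      (1 / 2) * (v ⬝ᵥ (A i i).mulVec v) + ∑ l ∈ univ.erase i, (x l ⬝ᵥ (A l i).mulVec v) := by
  simp only [hθ i, Function.update_self]
  congr 1
  exact sum_congr rfl fun l hl => by rw [Function.update_of_ne (ne_of_mem_erase hl)]

theorem sum_eq_blockQuadForm (hθ : IsQuadraticLoss A θ) (x : GameSpace d) :
    ∑ i, θ i x = blockQuadForm A x := by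
  simp only [hθ _ x, blockQuadForm]

theorem psiRegTerm_gap (hθ : IsQuadraticLoss A θ) (a : ℝ) (y : GameSpace d) (i : Fin N)
    (x z : GameSpace d) {t s : ℝ} (hts : t + s = 1) :
    t * psiRegTerm θ a y i x + s * psiRegTerm θ a y i z - psiRegTerm θ a y i (t • x + s • z) =
      t * s * (θ i (x - z) - a / 2 * ‖x i - z i‖ ^ 2) := by
  have hB (l : Fin N) (u u' : EuclideanSpace ℝ (Fin (d l)))
      (v v' : EuclideanSpace ℝ (Fin (d i))) :=
    (toLinearMap₂' ℝ (A l i)).convexCombination_gap u.ofLp u'.ofLp v.ofLp v'.ofLp hts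
  simp only [toLinearMap₂'_apply'] at hB
  have hii := hB i (x i) (z i) (x i) (z i)
  have hoff := sum_congr rfl fun l (_ : l ∈ univ.erase i) => hB l (x l) (z l) (x i) (z i)
  -- `x ↦ x_lᵀ A_{li} y_i` is linear, so its gap vanishes
  have hlin := sum_congr rfl fun l (_ : l ∈ univ.erase i) => hB l (x l) (z l) (y i) (y i)
  have hnorm := norm_sub_sq_convexCombination_gap (x i) (z i) (y i) hts
  simp only [sum_sub_distrib, sum_add_distrib, ← mul_sum, ← add_smul, hts, one_smul, sub_self,
    mulVec_zero, dotProduct_zero, mul_zero, sum_const_zero] at hoff hlin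
  simp only [psiRegTerm, hθ.apply_update, hθ _ (x - z), hθ _ x, hθ _ z, hθ _ (t • x + s • z),
    PiLp.add_apply, PiLp.smul_apply, PiLp.sub_apply, WithLp.ofLp_add, WithLp.ofLp_smul,
    WithLp.ofLp_sub, Pi.add_apply, Pi.smul_apply]
  linear_combination (1 / 2 : ℝ) * hii + hoff - hlin - a / 2 * hnorm -
    (1 / 2 : ℝ) * ((y i).ofLp ⬝ᵥ A i i *ᵥ (y i).ofLp) * hts

theorem psiReg_gap (hθ : IsQuadraticLoss A θ) (a : ℝ) (y x z : GameSpace d) {t s : ℝ}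
    (hts : t + s = 1) :
    t * psiReg θ a x y + s * psiReg θ a z y - psiReg θ a (t • x + s • z) y =
      t * s * (blockQuadForm A (x - z) - a / 2 * ‖x - z‖ ^ 2) := by
  have hψ (w : GameSpace d) : psiReg θ a w y = ∑ i, psiRegTerm θ a y i w := rfl
  simp only [hψ, ← hθ.sum_eq_blockQuadForm, PiLp.norm_sq_eq_of_L2 _ (x - z), mul_sum,
    ← sum_add_distrib, ← sum_sub_distrib]
  exact sum_congr rfl fun i _ => by rw [hθ.psiRegTerm_gap a y i x z hts, PiLp.sub_apply]

end IsQuadraticLoss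

end QuadraticGame

open Matrix in
theorem stmt16_general {N : ℕ} {d : Fin N → ℕ}
    (A : ∀ l i : Fin N, Matrix (Fin (d l)) (Fin (d i)) ℝ)
    (θ : Fin N → (PiLp 2 fun i => EuclideanSpace ℝ (Fin (d i))) → ℝ)
    (hθ : ∀ i x, θ i x = (1 / 2) * (x i ⬝ᵥ (A i i).mulVec (x i)) +
      ∑ l ∈ Finset.univ.erase i, (x l ⬝ᵥ (A l i).mulVec (x i)))
    (δ : ℝ)
    -- `C + Cᵀ` is positive definite, with smallest eigenvalue `δ`:
    -- `xᵀ(C + Cᵀ)x = 2 xᵀ C x ≥ δ‖x‖²`.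
    (hpos : ∀ x : PiLp 2 fun i => EuclideanSpace ℝ (Fin (d i)),
      δ * ‖x‖ ^ 2 ≤ 2 * blockQuadForm A x)
    (a : ℝ) (haδ : a ≤ δ) :
    ∀ y, ConvexOn ℝ Set.univ (fun x => psiReg θ a x y) := by
  intro y
  refine convexOn_univ_of_gap_eq (Q := fun v => blockQuadForm A v - a / 2 * ‖v‖ ^ 2)
    (fun v => ?_) (fun x z t s hts => IsQuadraticLoss.psiReg_gap hθ a y x z hts)
  have := mul_le_mul_of_nonneg_right haδ (sq_nonneg ‖v‖)
  linarith [hpos v]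

open Matrix in
theorem stmt16 {N : ℕ} {d : Fin N → ℕ}
    (A : ∀ l i : Fin N, Matrix (Fin (d l)) (Fin (d i)) ℝ)
    (hsym : ∀ i, (A i i).IsSymm)
    (θ : Fin N → (PiLp 2 fun i => EuclideanSpace ℝ (Fin (d i))) → ℝ)
    (hθ : ∀ i x, θ i x = (1 / 2) * (x i ⬝ᵥ (A i i).mulVec (x i)) +
      ∑ l ∈ Finset.univ.erase i, (x l ⬝ᵥ (A l i).mulVec (x i)))
    (δ : ℝ) (hδ : 0 < δ)
    -- `C + Cᵀ` is positive definite, with smallest eigenvalue `δ`: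
    -- `xᵀ(C + Cᵀ)x = 2 xᵀ C x ≥ δ‖x‖²`, with equality attained at some eigenvector.
    (hpos : ∀ x : PiLp 2 fun i => EuclideanSpace ℝ (Fin (d i)),
      δ * ‖x‖ ^ 2 ≤ 2 * blockQuadForm A x)
    (hattain : ∃ x : PiLp 2 fun i => EuclideanSpace ℝ (Fin (d i)),
      x ≠ 0 ∧ 2 * blockQuadForm A x = δ * ‖x‖ ^ 2)
    (a : ℝ) (ha : 0 < a) (haδ : a ≤ δ) :
    ∀ y, ConvexOn ℝ Set.univ (fun x => psiReg θ a x y) :=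
  stmt16_general A θ hθ δ hpos a haδ
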